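/- Let n ≥ 2 be even, let m ≥ 1, and let j ∈ {0,...,n−1} with j < 2^m. Let Z_1, Z_2, ... be i.i.d. random variables, each uniform on {0, n/2}, and define X_0 = j and X_s = ⌊X_{s−1}/2⌋ + Z_s for s ≥ 1. Then P(X_m is even) ≥ 1/2. -/

import Mathlib

/-!
Read the coins as the binary digits of `B = ∑ i, [bᵢ] 2^i`, which is uniform on `ℤ/2^m`, and
put `c = n/2`. Then `X_m = ⌊(j + 2cB) / 2^m⌋`, and its parity depends only on `B mod 2^m`.
If `2^m ∣ c` then, as `j < 2^m`, `X_m` is always even. Otherwise `c = 2^a q` with `q` odd and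
`a < m`, and the translation `B ↦ B + 2^(m-1-a)` of `ℤ/2^m` adds `q` to `X_m`, exchanging the
even and odd outcomes, so each has probability exactly `1/2`.
-/

open Finset

/-- The probability of the event `E` under the uniform distribution on the finite
sample space `Ω`. -/
noncomputable def probOf {Ω : Type*} [Fintype Ω] (E : Ω → Prop) : ℝ :=
  (Nat.card {ω : Ω // E ω} : ℝ) / (Fintype.card Ω : ℝ)

/-- The single-card position chain of the reverse Thorp shuffle:
`X_0 = j` and `X_{s+1} = ⌊X_s / 2⌋ + Z_{s+1}`, where the increments
`Z_1, Z_2, …` are i.i.d. uniform on `{0, n/2}`, encoded by fair coins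
`b : Fin m → Bool` (with `Z_{s+1} = n/2` iff `b s = true`). -/
def thorpX (n j : ℕ) {m : ℕ} (b : Fin m → Bool) : ℕ → ℕ
  | 0 => j
  | s + 1 => thorpX n j b s / 2 + (if h : s < m then (if b ⟨s, h⟩ then n / 2 else 0) else 0)

section probOf

variable {Ω Ω' : Type*} [Fintype Ω] [Fintype Ω']

theorem probOf_comp_equiv (e : Ω ≃ Ω') (E : Ω' → Prop) : probOf (E ∘ e) = probOf E := by
  unfold probOf
  rw [Nat.card_congr (e.subtypeEquiv (p := E ∘ e) fun _ => Iff.rfl), Fintype.card_congr e]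

theorem probOf_of_forall [Nonempty Ω] {E : Ω → Prop} (h : ∀ ω, E ω) : probOf E = 1 := by
  unfold probOf
  rw [Nat.card_congr (Equiv.subtypeUnivEquiv h), Nat.card_eq_fintype_card]
  exact div_self (Nat.cast_ne_zero.mpr Fintype.card_ne_zero)

theorem probOf_eq_half_of_add_iff_not {G : Type*} [AddGroup G] [Fintype G] (E : G → Prop)
    (t : G) (h : ∀ x, E (x + t) ↔ ¬E x) : probOf E = 1 / 2 := by
  classical
  have hswap : Nat.card {x // E x} = Nat.card {x // ¬E x} :=
    Nat.card_congr <| (Equiv.addRight t).subtypeEquiv fun x => by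
      simp only [Equiv.coe_addRight, h, not_not]
  have hcompl : Nat.card {x // ¬E x} = Fintype.card G - Nat.card {x // E x} := by
    simp only [Nat.card_eq_fintype_card, Fintype.card_subtype_compl]
  have hle : Nat.card {x // E x} ≤ Fintype.card G := by
    rw [Nat.card_eq_fintype_card]; exact Fintype.card_subtype_le _
  have htwice : (2 * Nat.card {x // E x} : ℕ) = Fintype.card G := by omega
  have hG : (Fintype.card G : ℝ) ≠ 0 := Nat.cast_ne_zero.mpr Fintype.card_ne_zero
  unfold probOf
  rw [div_eq_div_iff hG two_ne_zero, one_mul, ← htwice]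
  push_cast
  ring

end probOf

def thorpCoin {m : ℕ} (b : Fin m → Bool) (i : ℕ) : ℕ :=
  if h : i < m then (b ⟨i, h⟩).toNat else 0

theorem thorpX_succ (n j : ℕ) {m : ℕ} (b : Fin m → Bool) (s : ℕ) :
    thorpX n j b (s + 1) = thorpX n j b s / 2 + n / 2 * thorpCoin b s := by
  rw [thorpX, thorpCoin]
  split_ifs <;> simp_all

theorem thorpX_eq_div (n j : ℕ) {m : ℕ} (b : Fin m → Bool) (s : ℕ) :
    thorpX n j b s = (j + 2 * (n / 2) * ∑ i ∈ range s, thorpCoin b i * 2 ^ i) / 2 ^ s := by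
  induction s with
  | zero => simp [thorpX]
  | succ s ih =>
    rw [thorpX_succ, ih, Nat.div_div_eq_div_mul, ← pow_succ,
      ← Nat.add_mul_div_right _ _ (by positivity), sum_range_succ]
    ring_nf

def coinsEquiv (m : ℕ) : (Fin m → Bool) ≃ Fin (2 ^ m) :=
  (Equiv.arrowCongr (Equiv.refl _) finTwoEquiv.symm).trans finFunctionFinEquiv

theorem coinsEquiv_val {m : ℕ} (b : Fin m → Bool) :
    (coinsEquiv m b : ℕ) = ∑ i ∈ range m, thorpCoin b i * 2 ^ i := by
  rw [coinsEquiv, Equiv.trans_apply, finFunctionFinEquiv_apply, sum_range]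
  refine sum_congr rfl fun i _ => ?_
  simp only [thorpCoin, i.isLt, dif_pos, Equiv.arrowCongr_apply, Equiv.refl_symm,
    Equiv.refl_apply, Function.comp_apply]
  cases b i <;> rfl

/-- `X_m` as a function of the number `x` encoded by the coins. -/
def thorpValue (n j m x : ℕ) : ℕ := (j + 2 * (n / 2) * x) / 2 ^ m

theorem thorpX_eq_thorpValue (n j : ℕ) {m : ℕ} (b : Fin m → Bool) :
    thorpX n j b m = thorpValue n j m (coinsEquiv m b) := by
  rw [thorpX_eq_div, coinsEquiv_val, thorpValue]

theorem thorpValue_mod_two_pow_mod_two (n j m x : ℕ) :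
    thorpValue n j m (x % 2 ^ m) % 2 = thorpValue n j m x % 2 := by
  conv_rhs => rw [thorpValue, ← Nat.mod_add_div x (2 ^ m)]
  rw [thorpValue, show j + 2 * (n / 2) * (x % 2 ^ m + 2 ^ m * (x / 2 ^ m))
      = j + 2 * (n / 2) * (x % 2 ^ m) + 2 ^ m * (2 * (n / 2 * (x / 2 ^ m))) by ring,
    Nat.add_mul_div_left _ _ (by positivity), Nat.add_mul_mod_self_left]

theorem thorpValue_even_of_dvd {n j m : ℕ} (hj : j < 2 ^ m) (hdvd : 2 ^ m ∣ n / 2) (x : ℕ) :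
    thorpValue n j m x % 2 = 0 := by
  obtain ⟨d, hd⟩ := hdvd
  rw [thorpValue, hd, show j + 2 * (2 ^ m * d) * x = j + 2 ^ m * (2 * d * x) by ring,
    Nat.add_mul_div_left _ _ (by positivity), Nat.div_eq_of_lt hj, zero_add, mul_assoc,
    Nat.mul_mod_right]

theorem thorpValue_add_two_pow {n j m a q : ℕ} (hc : n / 2 = 2 ^ a * q) (ham : a < m) (x : ℕ) :
    thorpValue n j m (x + 2 ^ (m - 1 - a)) = thorpValue n j m x + q := by
  have hm : m = (m - 1 - a) + 1 + a := by omega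
  rw [thorpValue, thorpValue, ← Nat.add_mul_div_left _ _ (by positivity), hc]
  congr 1
  conv_rhs => rw [hm]
  ring

theorem thorpX_even_probability_general (n m j : ℕ) (hj2m : j < 2 ^ m) :
    (1 : ℝ) / 2 ≤ probOf (fun b : Fin m → Bool => thorpX n j b m % 2 = 0) := by
  have hX : (fun b : Fin m → Bool => thorpX n j b m % 2 = 0)
      = (fun x : Fin (2 ^ m) => thorpValue n j m x % 2 = 0) ∘ coinsEquiv m := by
    funext b
    rw [thorpX_eq_thorpValue, Function.comp_apply]
  rw [hX, probOf_comp_equiv]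
  by_cases hdvd : 2 ^ m ∣ n / 2
  · rw [probOf_of_forall fun x : Fin (2 ^ m) => thorpValue_even_of_dvd hj2m hdvd x]
    norm_num
  obtain ⟨a, q, hq, hc⟩ := Nat.exists_eq_two_pow_mul_odd (n := n / 2) fun h0 => by
    simp [h0] at hdvd
  have ham : a < m := by
    by_contra hma
    rw [hc] at hdvd
    exact hdvd ((pow_dvd_pow 2 (not_lt.mp hma)).mul_right q)
  have hshift : 2 ^ (m - 1 - a) < 2 ^ m := Nat.pow_lt_pow_right (by norm_num) (by omega)
  refine (probOf_eq_half_of_add_iff_not _ ⟨_, hshift⟩ fun x => ?_).ge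
  rw [Fin.val_add, thorpValue_mod_two_pow_mod_two, thorpValue_add_two_pow hc ham]
  have := Nat.odd_iff.mp hq
  omega

/-- Let `n ≥ 2` be even, `m ≥ 1`, and `j ∈ {0,…,n−1}` with `j < 2^m`.  If
`X_0 = j` and `X_s = ⌊X_{s−1}/2⌋ + Z_s` with `Z_1, Z_2, …` i.i.d. uniform on
`{0, n/2}`, then `P(X_m is even) ≥ 1/2`. -/
theorem thorpX_even_probability (n m j : ℕ) (hn2 : 2 ≤ n) (heven : n % 2 = 0)
    (hm : 1 ≤ m) (hj2m : j < 2 ^ m) (hjn : j < n) :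
    (1 : ℝ) / 2 ≤ probOf (fun b : Fin m → Bool => thorpX n j b m % 2 = 0) :=
  thorpX_even_probability_general n m j hj2m
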